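/- arXiv:2211.00200 — 4 statements merged into one kernel-verified Lean document; each statement's English description precedes it below -/
import Mathlib

section
/- The Hadamard product of ideals distributes over intersections: for any family of ideals J_l (l ∈ L) and any ideal K' in K[x_0,…,x_N], one has (⋂_{l∈L} J_l) ⋆ K' = ⋂_{l∈L} (J_l ⋆ K'). -/
open MvPolynomial

noncomputable section

variable {K : Type*} [Field K]

/-- The Hadamard product of two ideals `I, J ⊆ K[x_0,…,x_N]`: introduce new variables
`y_0,…,y_N` and `z_0,…,z_N` (encoded via a sum type), map `I` via `x_i ↦ y_i`, `J` via
`x_i ↦ z_i`, add the relations `x_i − y_i z_i`, and eliminate `y, z` (i.e. take the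
preimage in `K[x]`). -/
def hadamardProduct (N : ℕ) (I J : Ideal (MvPolynomial (Fin (N+1)) K)) :
    Ideal (MvPolynomial (Fin (N+1)) K) :=
  Ideal.comap
    (rename (Sum.inl : Fin (N+1) → Fin (N+1) ⊕ (Fin (N+1) ⊕ Fin (N+1))))
    (Ideal.map (rename (fun i : Fin (N+1) =>
        (Sum.inr (Sum.inl i) : Fin (N+1) ⊕ (Fin (N+1) ⊕ Fin (N+1))))) I
      + Ideal.map (rename (fun i : Fin (N+1) =>
        (Sum.inr (Sum.inr i) : Fin (N+1) ⊕ (Fin (N+1) ⊕ Fin (N+1))))) J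
      + Ideal.span { f | ∃ i : Fin (N+1),
          f = X (Sum.inl i) - X (Sum.inr (Sum.inl i)) * X (Sum.inr (Sum.inr i)) })

/-!
Put `S = K[z]/K'`. Substituting `x_i ↦ y_i z_i` and reducing `z` modulo `K'` is a surjection
`K[x,y,z] → S[y]` whose kernel is generated by `K'(z)` and the relations `x_i - y_i z_i`, so
`I ⋆ K'` is the contraction of the extension `I·S[y]` along `K[x] → S[y]`, `x_i ↦ y_i z_i`.
Since `S` is a free `K`-module, a polynomial lies in `I·S[y]` iff each of its coefficientwise
coordinates in a `K`-basis of `S` lies in `I`; hence extension, and then contraction, commute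
with arbitrary intersections.
-/

namespace MvPolynomial

section Coeffwise

variable {R S σ ι : Type*} [CommSemiring R] [CommSemiring S] [Algebra R S]

def coeffwise (φ : S →ₗ[R] R) : MvPolynomial σ S →+ MvPolynomial σ R where
  toFun p := .ofCoeff ((AddMonoidAlgebra.coeff p).mapRange φ φ.map_zero)
  map_zero' := by ext; simp
  map_add' p q := by
    ext m
    change φ (coeff m (p + q)) = φ (coeff m p) + φ (coeff m q)
    rw [coeff_add, map_add]

@[simp] lemma coeff_coeffwise (φ : S →ₗ[R] R) (p : MvPolynomial σ S) (m : σ →₀ ℕ) :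
    coeff m (coeffwise φ p) = φ (coeff m p) := rfl

lemma coeffwise_mul_map (φ : S →ₗ[R] R) (s : MvPolynomial σ S) (q : MvPolynomial σ R) :
    coeffwise φ (s * map (algebraMap R S) q) = coeffwise φ s * q := by
  classical
  ext m
  simp only [coeff_coeffwise, coeff_mul, coeff_map, map_sum]
  refine Finset.sum_congr rfl fun x _ => ?_
  rw [mul_comm, ← Algebra.smul_def, map_smul, smul_eq_mul, mul_comm]

lemma coeffwise_mem_of_mem_map {I : Ideal (MvPolynomial σ R)} (φ : S →ₗ[R] R)
    {p : MvPolynomial σ S} (hp : p ∈ I.map (map (algebraMap R S))) : coeffwise φ p ∈ I := by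
  suffices ∀ s, coeffwise φ (s * p) ∈ I by simpa using this 1
  induction hp using Submodule.span_induction with
  | mem x hx =>
    obtain ⟨q, hq, rfl⟩ := hx
    exact fun s => coeffwise_mul_map φ s q ▸ I.mul_mem_left _ hq
  | zero => simp
  | add x y _ _ hx hy => exact fun s => by rw [mul_add, map_add]; exact I.add_mem (hx s) (hy s)
  | smul a x _ hx => exact fun s => by rw [smul_eq_mul, ← mul_assoc]; exact hx _

lemma exists_eq_sum_map_coeffwise_mul_C (b : Module.Basis ι R S) (p : MvPolynomial σ S) :
    ∃ T : Finset ι,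
      p = ∑ i ∈ T, C (b i) * map (algebraMap R S) (coeffwise (b.coord i) p) := by
  classical
  refine ⟨p.support.biUnion fun m => (b.repr (coeff m p)).support, ?_⟩
  ext m
  have hsub : (b.repr (coeff m p)).support ⊆
      p.support.biUnion fun m => (b.repr (coeff m p)).support := by
    by_cases hm : m ∈ p.support
    · exact Finset.subset_biUnion_of_mem (fun m => (b.repr (coeff m p)).support) hm
    · simp [notMem_support_iff.mp hm]
  simp only [coeff_sum, coeff_C_mul, coeff_map, coeff_coeffwise, Module.Basis.coord_apply,
    mul_comm (b _), ← Algebra.smul_def]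
  conv_lhs => rw [← b.linearCombination_repr (coeff m p), Finsupp.linearCombination_apply]
  exact Finsupp.sum_of_support_subset _ hsub _ (by simp)

lemma mem_map_algebraMap_iff (b : Module.Basis ι R S) {I : Ideal (MvPolynomial σ R)}
    {p : MvPolynomial σ S} :
    p ∈ I.map (map (algebraMap R S)) ↔ ∀ i, coeffwise (b.coord i) p ∈ I := by
  refine ⟨fun hp i => coeffwise_mem_of_mem_map _ hp, fun h => ?_⟩
  obtain ⟨T, hT⟩ := exists_eq_sum_map_coeffwise_mul_C b p
  rw [hT]
  exact Ideal.sum_mem _ fun i _ => Ideal.mul_mem_left _ _ (Ideal.mem_map_of_mem _ (h i))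

lemma ideal_map_iInf (b : Module.Basis ι R S) {L : Type*} (J : L → Ideal (MvPolynomial σ R)) :
    (⨅ l, J l).map (map (algebraMap R S)) = ⨅ l, (J l).map (map (algebraMap R S)) := by
  ext p
  simp only [Submodule.mem_iInf, mem_map_algebraMap_iff b]
  exact forall_comm

end Coeffwise

section Elimination

variable {R σ τ : Type*} [CommRing R]

lemma aeval_sumElim_X_rename_inr (f : σ → MvPolynomial τ R) (p : MvPolynomial τ R) :
    aeval (Sum.elim f X) (rename Sum.inr p) = p := by
  rw [aeval_rename, Sum.elim_comp_inr, aeval_X_left_apply]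

lemma aeval_sumElim_X_surjective (f : σ → MvPolynomial τ R) :
    Function.Surjective
      (aeval (Sum.elim f X) : MvPolynomial (σ ⊕ τ) R →ₐ[R] MvPolynomial τ R) :=
  fun p => ⟨rename Sum.inr p, aeval_sumElim_X_rename_inr f p⟩

lemma sub_rename_aeval_sumElim_X_mem (f : σ → MvPolynomial τ R)
    (p : MvPolynomial (σ ⊕ τ) R) :
    p - rename Sum.inr (aeval (Sum.elim f X) p) ∈
      Ideal.span (Set.range fun i => X (.inl i) - rename Sum.inr (f i)) := by
  induction p using MvPolynomial.induction_on with
  | C a => simp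
  | add p q hp hq => rw [map_add, map_add, add_sub_add_comm]; exact add_mem hp hq
  | mul_X p v hp =>
    have hv : X v - rename Sum.inr (aeval (Sum.elim f X) (X v : MvPolynomial (σ ⊕ τ) R)) ∈
        Ideal.span (Set.range fun i => X (.inl i) - rename Sum.inr (f i)) := by
      cases v with
      | inl i => exact Ideal.subset_span ⟨i, by simp⟩
      | inr j => simp
    rw [map_mul, map_mul, show ∀ a b c d : MvPolynomial (σ ⊕ τ) R,
      a * c - b * d = (a - b) * c + b * (c - d) from fun _ _ _ _ => by ring]
    exact add_mem (Ideal.mul_mem_right _ _ hp) (Ideal.mul_mem_left _ _ hv)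

lemma ker_aeval_sumElim_X (f : σ → MvPolynomial τ R) :
    RingHom.ker (aeval (Sum.elim f X) : MvPolynomial (σ ⊕ τ) R →ₐ[R] MvPolynomial τ R) =
      Ideal.span (Set.range fun i => X (.inl i) - rename Sum.inr (f i)) := by
  refine le_antisymm (fun p hp => ?_) ?_
  · simpa only [RingHom.mem_ker.mp hp, map_zero, sub_zero] using
      sub_rename_aeval_sumElim_X_mem f p
  · rw [Ideal.span_le]
    rintro _ ⟨i, rfl⟩
    rw [SetLike.mem_coe, RingHom.mem_ker, map_sub, aeval_sumElim_X_rename_inr]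
    simp

lemma ker_mapAlgHom_mkₐ_comp_sumAlgEquiv (J : Ideal (MvPolynomial τ R)) :
    RingHom.ker ((mapAlgHom (Ideal.Quotient.mkₐ R J)).comp
      (sumAlgEquiv R σ τ).toAlgHom) = J.map (rename Sum.inr) := by
  set e := (sumAlgEquiv R σ τ).toAlgHom
  have hC : J.map (C : MvPolynomial τ R →+* MvPolynomial σ (MvPolynomial τ R)) =
      (J.map (rename Sum.inr)).map e := by
    rw [Ideal.map_mapₐ, AlgHom.coe_ideal_map]
    congr 1
    apply ringHom_ext <;> intro <;> simp [e, sumAlgEquiv_X_inr]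
  have hJ : RingHom.ker (Ideal.Quotient.mkₐ R J) = J := Ideal.Quotient.mkₐ_ker R J
  rw [← AlgHom.comap_ker, ker_mapAlgHom, hJ, hC,
    Ideal.comap_map_of_bijective e (sumAlgEquiv R σ τ).bijective]

end Elimination

end MvPolynomial

section HadamardProduct

variable {σ : Type*}

def hadamardMap (J : Ideal (MvPolynomial σ K)) :
    MvPolynomial σ K →ₐ[K] MvPolynomial σ (MvPolynomial σ K ⧸ J) :=
  aeval fun i => X i * C (Ideal.Quotient.mk J (X i))

/-- `x_i ↦ y_i z_i`; then the `z` variables become the coefficient ring `K[z]/J`. -/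
def hadamardSubst (J : Ideal (MvPolynomial σ K)) :
    MvPolynomial (σ ⊕ (σ ⊕ σ)) K →ₐ[K] MvPolynomial σ (MvPolynomial σ K ⧸ J) :=
  ((mapAlgHom (Ideal.Quotient.mkₐ K J)).comp (sumAlgEquiv K σ σ).toAlgHom).comp
    (aeval (Sum.elim (fun i => X (.inl i) * X (.inr i)) X))

lemma hadamardSubst_surjective (J : Ideal (MvPolynomial σ K)) :
    Function.Surjective (hadamardSubst J) :=
  ((map_surjective _ (Ideal.Quotient.mkₐ_surjective K J)).comp
    (sumAlgEquiv K σ σ).surjective).comp (aeval_sumElim_X_surjective _)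

lemma ker_hadamardSubst (J : Ideal (MvPolynomial σ K)) :
    RingHom.ker (hadamardSubst J) =
      J.map (rename fun i => (.inr (.inr i) : σ ⊕ (σ ⊕ σ))) ⊔
        Ideal.span { f | ∃ i, f = X (.inl i) - X (.inr (.inl i)) * X (.inr (.inr i)) } := by
  set φ : MvPolynomial (σ ⊕ (σ ⊕ σ)) K →ₐ[K] MvPolynomial (σ ⊕ σ) K :=
    aeval (Sum.elim (fun i => X (.inl i) * X (.inr i)) X)
  have hJ : J.map (rename Sum.inr) = (J.map (rename fun i => .inr (.inr i))).map φ := by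
    rw [Ideal.map_mapₐ]
    congr 1
    ext i
    simp [φ]
  have hrel : RingHom.ker φ =
      Ideal.span { f | ∃ i, f = X (.inl i) - X (.inr (.inl i)) * X (.inr (.inr i)) } := by
    rw [ker_aeval_sumElim_X]
    congr 1
    ext f
    simp [eq_comm]
  rw [hadamardSubst, ← AlgHom.comap_ker, ker_mapAlgHom_mkₐ_comp_sumAlgEquiv, hJ,
    Ideal.comap_map_of_surjective' φ (aeval_sumElim_X_surjective _), hrel]

lemma hadamardSubst_comp_rename_inl (J : Ideal (MvPolynomial σ K)) :
    (hadamardSubst J).comp (rename Sum.inl) = hadamardMap J := by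
  ext i
  simp [hadamardSubst, hadamardMap, sumAlgEquiv_X_inl, sumAlgEquiv_X_inr]

lemma map_hadamardSubst_map_rename (I J : Ideal (MvPolynomial σ K)) :
    (I.map (rename fun i => (.inr (.inl i) : σ ⊕ (σ ⊕ σ)))).map (hadamardSubst J) =
      I.map (map (algebraMap K (MvPolynomial σ K ⧸ J))) := by
  rw [Ideal.map_mapₐ, AlgHom.coe_ideal_map]
  congr 1
  apply ringHom_ext <;> intro <;> simp [hadamardSubst, sumAlgEquiv_X_inl]

theorem hadamardProduct_eq_comap_hadamardMap (N : ℕ)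
    (I J : Ideal (MvPolynomial (Fin (N+1)) K)) :
    hadamardProduct N I J = (I.map (map (algebraMap K _))).comap (hadamardMap J) := by
  rw [hadamardProduct, Ideal.add_eq_sup, Ideal.add_eq_sup, sup_assoc, ← ker_hadamardSubst,
    ← Ideal.comap_map_of_surjective' _ (hadamardSubst_surjective J),
    map_hadamardSubst_map_rename, Ideal.comap_comapₐ, hadamardSubst_comp_rename_inl]

end HadamardProduct

theorem hadamardProduct_iInf_general {N : ℕ} {L : Type*}
    (J : L → Ideal (MvPolynomial (Fin (N+1)) K)) (K' : Ideal (MvPolynomial (Fin (N+1)) K)) :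
    hadamardProduct N (⨅ l, J l) K' = ⨅ l, hadamardProduct N (J l) K' := by
  simp only [hadamardProduct_eq_comap_hadamardMap,
    ideal_map_iInf (Module.Basis.ofVectorSpace K (MvPolynomial (Fin (N+1)) K ⧸ K')),
    Ideal.comap_iInf]

/-- The Hadamard product of ideals distributes over (arbitrary) intersections. -/
theorem hadamardProduct_iInf [IsAlgClosed K] {N : ℕ} {L : Type*}
    (J : L → Ideal (MvPolynomial (Fin (N+1)) K)) (K' : Ideal (MvPolynomial (Fin (N+1)) K)) :
    hadamardProduct N (⨅ l, J l) K' = ⨅ l, hadamardProduct N (J l) K' :=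
  hadamardProduct_iInf_general J K'
end
end

section
/- Let P = [p_0:p_1:p_2] ∈ P^2 be a point with all coordinates nonzero (i.e. P ∈ P^2 \ Δ_1). Then for every integer t ≥ 1, I(P) ⋆ 𝔪^t = 𝔪^t. -/
/-! The substitution `x_i ↦ x_i, y_i ↦ p_i, z_i ↦ p_i⁻¹ x_i` is a retraction of
`K[x] → K[x,y,z]` that kills `I(P)(y)` and the relations `x_i − y_i z_i` and maps `𝔪^t(z)` into
`𝔪^t`; hence `I(P) ⋆ 𝔪^t ⊆ 𝔪^t`. Conversely, modulo the relations every monomial `x^α` equals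
`y^α z^α ∈ 𝔪^t(z)`, so `𝔪^t ⊆ I ⋆ 𝔪^t` for every ideal `I`. -/

open MvPolynomial

noncomputable section

variable {K : Type*} [Field K]

/-- The Hadamard product of two ideals `I, J ⊆ K[x_0,x_1,x_2]`: introduce new variables
`y_0,y_1,y_2` and `z_0,z_1,z_2` (encoded via a sum type), map `I` via `x_i ↦ y_i`, `J` via
`x_i ↦ z_i`, add the relations `x_i − y_i z_i`, and eliminate `y, z` (i.e. take the
preimage in `K[x_0,x_1,x_2]`). -/
def hadamard (I J : Ideal (MvPolynomial (Fin 3) K)) : Ideal (MvPolynomial (Fin 3) K) :=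
  Ideal.comap
    (rename (Sum.inl : Fin 3 → Fin 3 ⊕ (Fin 3 ⊕ Fin 3)))
    (Ideal.map (rename (fun i : Fin 3 => (Sum.inr (Sum.inl i) : Fin 3 ⊕ (Fin 3 ⊕ Fin 3)))) I
      + Ideal.map (rename (fun i : Fin 3 => (Sum.inr (Sum.inr i) : Fin 3 ⊕ (Fin 3 ⊕ Fin 3)))) J
      + Ideal.span { f | ∃ i : Fin 3,
          f = X (Sum.inl i) - X (Sum.inr (Sum.inl i)) * X (Sum.inr (Sum.inr i)) })

/-- The homogeneous vanishing ideal of the point `P = [p_0:p_1:p_2] ∈ ℙ²`, generated by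
the forms `p_j x_i − p_i x_j`. -/
def pointIdeal (p : Fin 3 → K) : Ideal (MvPolynomial (Fin 3) K) :=
  Ideal.span { f | ∃ i j : Fin 3, f = C (p j) * X i - C (p i) * X j }

/-- The irrelevant ideal `𝔪 = ⟨x_0,x_1,x_2⟩` of `K[x_0,x_1,x_2]`. -/
def irrelevantIdeal (K : Type*) [Field K] : Ideal (MvPolynomial (Fin 3) K) :=
  Ideal.span (Set.range X)

namespace Ideal

variable {R : Type*} [CommRing R]

theorem sup_pow_le_sup_pow (I J : Ideal R) (n : ℕ) : (I ⊔ J) ^ n ≤ I ⊔ J ^ n := by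
  induction n with
  | zero => simp
  | succ n ih =>
    calc (I ⊔ J) ^ (n + 1) = (I ⊔ J) ^ n * (I ⊔ J) := pow_succ _ n
      _ ≤ (I ⊔ J ^ n) * (I ⊔ J) := mul_mono_left ih
      _ ≤ I ⊔ J ^ n * J := by
        rw [sup_mul, mul_sup (J ^ n)]
        exact sup_le (mul_le_left.trans le_sup_left) (sup_le_sup_right mul_le_right _)
      _ = I ⊔ J ^ (n + 1) := by rw [pow_succ]

theorem span_range_pow_le_sup_span_pow {ι : Type*} (a b c : ι → R) (n : ℕ) :
    span (Set.range a) ^ n ≤ span {f | ∃ i, f = a i - b i * c i} ⊔ span (Set.range c) ^ n := by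
  refine le_trans (pow_right_mono ?_ n) (sup_pow_le_sup_pow _ _ n)
  rw [span_le]
  rintro _ ⟨i, rfl⟩
  rw [← sub_add_cancel (a i) (b i * c i)]
  exact add_mem (mem_sup_left (subset_span ⟨i, rfl⟩))
    (mem_sup_right (mul_mem_left _ _ (subset_span ⟨i, rfl⟩)))

theorem span_range_pow_le_comap_pow {S F ι : Type*} [CommRing S] [FunLike F R S]
    [RingHomClass F R S] (φ : F) (g : ι → R) (J : Ideal S) (hg : ∀ i, φ (g i) ∈ J) (n : ℕ) :
    span (Set.range g) ^ n ≤ (J ^ n).comap φ := by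
  rw [← map_le_iff_le_comap, Ideal.map_pow]
  refine pow_right_mono ?_ n
  rw [map_span, span_le, ← Set.range_comp]
  rintro _ ⟨i, rfl⟩
  exact hg i

end Ideal

namespace MvPolynomial

theorem aeval_C_comp_eq_C_eval {R σ τ : Type*} [CommSemiring R] (p : σ → R)
    (f : MvPolynomial σ R) : aeval (fun i => (C (p i) : MvPolynomial τ R)) f = C (eval p f) := by
  induction f using MvPolynomial.induction_on <;> simp_all

end MvPolynomial

theorem map_irrelevantIdeal_pow {σ : Type*} (e : Fin 3 → σ) (t : ℕ) :
    (irrelevantIdeal K ^ t).map (rename e) = Ideal.span (Set.range fun i => X (e i)) ^ t := by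
  rw [Ideal.map_pow, irrelevantIdeal, Ideal.map_span, ← Set.range_comp]
  simp only [Function.comp_def, rename_X]

theorem irrelevantIdeal_pow_le_hadamard (I : Ideal (MvPolynomial (Fin 3) K)) (t : ℕ) :
    irrelevantIdeal K ^ t ≤ hadamard I (irrelevantIdeal K ^ t) := by
  rw [hadamard, ← Ideal.map_le_iff_le_comap, map_irrelevantIdeal_pow, map_irrelevantIdeal_pow]
  exact (Ideal.span_range_pow_le_sup_span_pow _ _ _ t).trans
    (sup_le le_sup_right (le_sup_of_le_left le_sup_right))

theorem pointIdeal_le_ker_eval (p : Fin 3 → K) : pointIdeal p ≤ RingHom.ker (eval p) := by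
  rw [pointIdeal, Ideal.span_le]
  rintro _ ⟨i, j, rfl⟩
  simp [mul_comm]

theorem hadamard_irrelevantIdeal_pow_le {I : Ideal (MvPolynomial (Fin 3) K)} {p : Fin 3 → K}
    (hp : ∀ i, p i ≠ 0) (hI : I ≤ RingHom.ker (eval p)) (t : ℕ) :
    hadamard I (irrelevantIdeal K ^ t) ≤ irrelevantIdeal K ^ t := by
  set ψ : MvPolynomial (Fin 3 ⊕ (Fin 3 ⊕ Fin 3)) K →ₐ[K] MvPolynomial (Fin 3) K :=
    aeval (Sum.elim X (Sum.elim (fun i => C (p i)) (fun i => C (p i)⁻¹ * X i)))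
  have hretract : ψ.comp (rename Sum.inl) = AlgHom.id K _ := by
    ext i; simp [ψ]
  have hy : ∀ f, ψ (rename (fun i => Sum.inr (Sum.inl i)) f) = C (eval p f) := by
    intro f
    rw [aeval_rename]
    exact aeval_C_comp_eq_C_eval p f
  have hz : ∀ i, ψ (X (Sum.inr (Sum.inr i))) ∈ irrelevantIdeal K := by
    intro i
    simp only [ψ, aeval_X, Sum.elim_inr]
    exact Ideal.mul_mem_left _ _ (Ideal.subset_span (Set.mem_range_self i))
  have hrel : ∀ i, ψ (X (Sum.inl i) - X (Sum.inr (Sum.inl i)) * X (Sum.inr (Sum.inr i))) = 0 := by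
    intro i
    simp [ψ, ← mul_assoc, ← C_mul, hp i]
  calc hadamard I (irrelevantIdeal K ^ t)
      ≤ ((irrelevantIdeal K ^ t).comap ψ).comap (rename Sum.inl) := by
        refine Ideal.comap_mono (sup_le (sup_le ?_ ?_) ?_)
        · rw [Ideal.map_le_iff_le_comap]
          intro f hf
          rw [Ideal.mem_comap, Ideal.mem_comap, hy, RingHom.mem_ker.mp (hI hf), C_0]
          exact zero_mem _
        · rw [map_irrelevantIdeal_pow]
          exact Ideal.span_range_pow_le_comap_pow ψ _ _ hz t
        · rw [Ideal.span_le]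
          rintro _ ⟨i, rfl⟩
          rw [SetLike.mem_coe, Ideal.mem_comap, hrel]
          exact zero_mem _
    _ = irrelevantIdeal K ^ t := by
        ext f
        rw [Ideal.mem_comap, Ideal.mem_comap, ← AlgHom.comp_apply, hretract, AlgHom.id_apply]

theorem hadamard_pointIdeal_irrelevant_pow_general (p : Fin 3 → K)
    (hp : ∀ i, p i ≠ 0) (t : ℕ) :
    hadamard (pointIdeal p) ((irrelevantIdeal K) ^ t) = (irrelevantIdeal K) ^ t :=
  (hadamard_irrelevantIdeal_pow_le hp (pointIdeal_le_ker_eval p) t).antisymm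
    (irrelevantIdeal_pow_le_hadamard _ t)

/-- If `P ∈ ℙ² \ Δ₁` (all coordinates of `P` are nonzero), then `I(P) ⋆ 𝔪^t = 𝔪^t`
for every `t ≥ 1`. -/
theorem hadamard_pointIdeal_irrelevant_pow [IsAlgClosed K] (p : Fin 3 → K)
    (hp : ∀ i, p i ≠ 0) (t : ℕ) (ht : 1 ≤ t) :
    hadamard (pointIdeal p) ((irrelevantIdeal K) ^ t) = (irrelevantIdeal K) ^ t :=
  hadamard_pointIdeal_irrelevant_pow_general p hp t
end
end

section
/- Let P and Q be any two points of P^2 such that P ⋆ Q is defined (i.e. p_i q_i ≠ 0 for some i). Then for all integers m, n ≥ 1, I(P)^m ⋆ I(Q)^n ⊇ I(P ⋆ Q)^{m+n−1}. -/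
open MvPolynomial

noncomputable section

variable {K : Type*} [Field K]

/-!
Modulo the relations `x_i - y_i z_i`, every `f(x)` is congruent to `f(y ⋆ z)`, so it suffices
to show that `x_i ↦ y_i z_i` sends `I(P ⋆ Q)^(m+n-1)` into `I(P)(y)^m + I(Q)(z)^n`. On generators,
`p_j q_j x_i - p_i q_i x_j ↦ q_j z_i (p_j y_i - p_i y_j) + p_i y_j (q_j z_i - q_i z_j)`,
so `I(P ⋆ Q)` lands in `A + B` with `A = I(P)(y)`, `B = I(Q)(z)`; and `(A + B)^(m+n-1) ⊆ A^m + B^n`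
because each term `A^i B^(m+n-1-i)` of the binomial expansion has `i ≥ m` or `m+n-1-i ≥ n`.
-/

theorem Ideal.sup_pow_le_pow_sup_pow_of_add_le {R : Type*} [CommSemiring R] {I J : Ideal R}
    {k m n : ℕ} (h : m + n ≤ k + 1) : (I ⊔ J) ^ k ≤ I ^ m ⊔ J ^ n := by
  rw [← Ideal.add_eq_sup, ← Ideal.add_eq_sup, add_pow, Ideal.sum_eq_sup]
  refine Finset.sup_le fun i _ => ?_
  by_cases hi' : m ≤ i
  · exact Ideal.mul_le_left.trans (Ideal.mul_le_left.trans
      ((Ideal.pow_le_pow_right hi').trans le_sup_left))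
  · refine Ideal.mul_le_left.trans (Ideal.mul_le_right.trans
      ((Ideal.pow_le_pow_right ?_).trans le_sup_right))
    lia

theorem sub_mem_pointIdeal (p : Fin 3 → K) (i j : Fin 3) :
    C (p j) * X i - C (p i) * X j ∈ pointIdeal p :=
  Ideal.subset_span ⟨i, j, rfl⟩

namespace Hadamard

abbrev Vars := Fin 3 ⊕ (Fin 3 ⊕ Fin 3)

def y (i : Fin 3) : Vars := Sum.inr (Sum.inl i)

def z (i : Fin 3) : Vars := Sum.inr (Sum.inr i)

def yz (K : Type*) [Field K] (i : Fin 3) : MvPolynomial Vars K := X (y i) * X (z i)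

theorem le_hadamard_of_map_aeval_le {L I J : Ideal (MvPolynomial (Fin 3) K)}
    (h : L.map (aeval (yz K)) ≤ I.map (rename y) + J.map (rename z)) :
    L ≤ hadamard I J := by
  set T : Ideal (MvPolynomial Vars K) := Ideal.span { f | ∃ i : Fin 3,
      f = X (Sum.inl i) - X (Sum.inr (Sum.inl i)) * X (Sum.inr (Sum.inr i)) }
  have hquot : (Ideal.Quotient.mkₐ K T).comp (rename Sum.inl)
      = (Ideal.Quotient.mkₐ K T).comp (aeval (yz K)) := by
    ext i
    simp only [AlgHom.coe_comp, Ideal.Quotient.mkₐ_eq_mk, Function.comp_apply, rename_X,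
      aeval_X]
    exact Ideal.Quotient.eq.2 (Ideal.subset_span ⟨i, rfl⟩)
  intro f hf
  have hT : rename Sum.inl f - aeval (yz K) f ∈ T :=
    Ideal.Quotient.eq.1 (AlgHom.congr_fun hquot f)
  have hf' : aeval (yz K) f ∈ I.map (rename y) + J.map (rename z) :=
    h (Ideal.mem_map_of_mem _ hf)
  rw [hadamard, Ideal.mem_comap, ← sub_add_cancel (rename Sum.inl f) (aeval (yz K) f)]
  exact Ideal.add_mem _ (Ideal.mem_sup_right hT) (Ideal.mem_sup_left hf')

theorem map_aeval_pointIdeal_mul_le (p q : Fin 3 → K) :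
    (pointIdeal (fun i => p i * q i)).map (aeval (yz K))
      ≤ (pointIdeal p).map (rename y) + (pointIdeal q).map (rename z) := by
  refine Ideal.map_le_of_le_comap (Ideal.span_le.2 ?_)
  rintro _ ⟨i, j, rfl⟩
  have hp : C (p j) * X (y i) - C (p i) * X (y j) ∈ (pointIdeal p).map (rename y) := by
    simpa using Ideal.mem_map_of_mem (rename y) (sub_mem_pointIdeal p i j)
  have hq : C (q j) * X (z i) - C (q i) * X (z j) ∈ (pointIdeal q).map (rename z) := by
    simpa using Ideal.mem_map_of_mem (rename z) (sub_mem_pointIdeal q i j)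
  have hsplit : aeval (yz K) (C (p j * q j) * X i - C (p i * q i) * X j)
      = C (q j) * X (z i) * (C (p j) * X (y i) - C (p i) * X (y j))
        + C (p i) * X (y j) * (C (q j) * X (z i) - C (q i) * X (z j)) := by
    simp only [map_sub, map_mul, aeval_X, aeval_C, algebraMap_eq, yz]
    ring
  rw [SetLike.mem_coe, Ideal.mem_comap, hsplit]
  exact Ideal.add_mem _ (Ideal.mem_sup_left (Ideal.mul_mem_left _ _ hp))
    (Ideal.mem_sup_right (Ideal.mul_mem_left _ _ hq))

end Hadamard

open Hadamard

theorem pointIdeal_pow_le_hadamard_general (p q : Fin 3 → K)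
    (m n : ℕ) :
    pointIdeal (fun i => p i * q i) ^ (m + n - 1)
      ≤ hadamard (pointIdeal p ^ m) (pointIdeal q ^ n) := by
  apply le_hadamard_of_map_aeval_le
  calc (pointIdeal (fun i => p i * q i) ^ (m + n - 1)).map (aeval (yz K))
      = ((pointIdeal (fun i => p i * q i)).map (aeval (yz K))) ^ (m + n - 1) := Ideal.map_pow ..
    _ ≤ ((pointIdeal p).map (rename y) + (pointIdeal q).map (rename z)) ^ (m + n - 1) :=
        Ideal.pow_right_mono (map_aeval_pointIdeal_mul_le p q) _
    _ ≤ ((pointIdeal p).map (rename y)) ^ m + ((pointIdeal q).map (rename z)) ^ n :=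
        Ideal.sup_pow_le_pow_sup_pow_of_add_le (by lia)
    _ = (pointIdeal p ^ m).map (rename y) + (pointIdeal q ^ n).map (rename z) := by
        rw [Ideal.map_pow, Ideal.map_pow]

/-- If `P, Q ∈ ℙ²` are points such that `P ⋆ Q` is defined (i.e. `p_i q_i ≠ 0` for some
`i`), then for all `m, n ≥ 1`, `I(P ⋆ Q)^{m+n−1} ⊆ I(P)^m ⋆ I(Q)^n`. -/
theorem pointIdeal_pow_le_hadamard [IsAlgClosed K] (p q : Fin 3 → K)
    (hp : p ≠ 0) (hq : q ≠ 0) (hpq : ∃ i, p i * q i ≠ 0)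
    (m n : ℕ) (hm : 1 ≤ m) (hn : 1 ≤ n) :
    pointIdeal (fun i => p i * q i) ^ (m + n - 1)
      ≤ hadamard (pointIdeal p ^ m) (pointIdeal q ^ n) :=
  pointIdeal_pow_le_hadamard_general p q m n
end
end

section
/- Let P ∈ P^2 be a point with all coordinates nonzero and let Q ∈ Δ_0 be a coordinate point (exactly one nonzero coordinate). Then for all integers m, n ≥ 1, I(P)^m ⋆ I(Q)^n = I(Q)^n = I(P ⋆ Q)^n; in particular, if m > 1 then I(P)^m ⋆ I(Q)^n ≠ I(P ⋆ Q)^{m+n−1}. -/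
open MvPolynomial

noncomputable section

variable {K : Type*} [Field K]

lemma pointIdeal_coord (q : Fin 3 → K) (i₀ : Fin 3) (h0 : q i₀ ≠ 0)
    (h : ∀ j, j ≠ i₀ → q j = 0) :
    pointIdeal q = Ideal.span ((fun j => (X j : MvPolynomial (Fin 3) K)) '' {j | j ≠ i₀}) := by
  apply le_antisymm
  · rw [pointIdeal, Ideal.span_le]
    rintro f ⟨i, j, rfl⟩
    by_cases hi : i = i₀
    · by_cases hj : j = i₀
      · subst hi hj; simp
      · subst hi
        rw [h j hj]
        simp only [map_zero, zero_mul, zero_sub, SetLike.mem_coe]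
        exact neg_mem (Ideal.mul_mem_left _ _ (Ideal.subset_span ⟨j, hj, rfl⟩))
    · by_cases hj : j = i₀
      · subst hj
        rw [h i hi]
        simp only [map_zero, zero_mul, sub_zero, SetLike.mem_coe]
        exact Ideal.mul_mem_left _ _ (Ideal.subset_span ⟨i, hi, rfl⟩)
      · rw [h i hi, h j hj]; simp
  · rw [Ideal.span_le]
    rintro f ⟨j, hj, rfl⟩
    have he : (X j : MvPolynomial (Fin 3) K)
        = C (q i₀)⁻¹ * (C (q i₀) * X j - C (q j) * X i₀) := by
      rw [h j hj]
      rw [map_zero, zero_mul, sub_zero, ← mul_assoc, ← C_mul, inv_mul_cancel₀ h0, C_1, one_mul]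
    show X j ∈ pointIdeal q
    rw [he]
    exact Ideal.mul_mem_left _ _ (Ideal.subset_span ⟨j, i₀, rfl⟩)

lemma sub_mem_relations (f : MvPolynomial (Fin 3) K) :
    rename (Sum.inl : Fin 3 → Fin 3 ⊕ (Fin 3 ⊕ Fin 3)) f
      - aeval (fun i : Fin 3 => X (Sum.inr (Sum.inl i)) * X (Sum.inr (Sum.inr i))) f
    ∈ Ideal.span { g : MvPolynomial (Fin 3 ⊕ (Fin 3 ⊕ Fin 3)) K | ∃ i : Fin 3,
        g = X (Sum.inl i) - X (Sum.inr (Sum.inl i)) * X (Sum.inr (Sum.inr i)) } := by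
  induction f using MvPolynomial.induction_on with
  | C a => simp
  | add p q hp hq =>
      rw [map_add, map_add]
      convert add_mem hp hq using 1; ring
  | mul_X p i hp =>
      rw [map_mul, map_mul, rename_X, aeval_X]
      have hgen : (X (Sum.inl i) - X (Sum.inr (Sum.inl i)) * X (Sum.inr (Sum.inr i)) :
          MvPolynomial (Fin 3 ⊕ (Fin 3 ⊕ Fin 3)) K) ∈ Ideal.span
          { g : MvPolynomial (Fin 3 ⊕ (Fin 3 ⊕ Fin 3)) K | ∃ i : Fin 3,
            g = X (Sum.inl i) - X (Sum.inr (Sum.inl i)) * X (Sum.inr (Sum.inr i)) } :=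
        Ideal.subset_span ⟨i, rfl⟩
      have h1 := Ideal.mul_mem_left _ (rename Sum.inl p) hgen
      have h2 := Ideal.mul_mem_left _ (X (Sum.inr (Sum.inl i)) * X (Sum.inr (Sum.inr i))) hp
      convert add_mem h1 h2 using 1; ring

/-- Let `P ∈ ℙ² \ Δ₁` (all coordinates nonzero) and let `Q ∈ Δ₀` be a coordinate point
(exactly one nonzero coordinate). Then for all `m, n ≥ 1`,
`I(P)^m ⋆ I(Q)^n = I(Q)^n = I(P ⋆ Q)^n`; in particular, if `m > 1`, then
`I(P)^m ⋆ I(Q)^n ≠ I(P ⋆ Q)^{m+n−1}`. -/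
theorem hadamard_pow_pointIdeal_coordinate_point [IsAlgClosed K] (p q : Fin 3 → K)
    (hp : ∀ i, p i ≠ 0) (hq : ∃ i, q i ≠ 0 ∧ ∀ j, j ≠ i → q j = 0)
    (m n : ℕ) (hm : 1 ≤ m) (hn : 1 ≤ n) :
    hadamard (pointIdeal p ^ m) (pointIdeal q ^ n) = pointIdeal q ^ n ∧
    pointIdeal q ^ n = pointIdeal (fun i => p i * q i) ^ n ∧
    (1 < m →
      hadamard (pointIdeal p ^ m) (pointIdeal q ^ n)
        ≠ pointIdeal (fun i => p i * q i) ^ (m + n - 1)) := by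
  obtain ⟨i₀, h0, hz⟩ := hq
  set M : Ideal (MvPolynomial (Fin 3) K) :=
    Ideal.span ((fun j => (X j : MvPolynomial (Fin 3) K)) '' {j | j ≠ i₀}) with hMdef
  have hMq : pointIdeal q = M := pointIdeal_coord q i₀ h0 hz
  have hMpq : pointIdeal (fun i => p i * q i) = M :=
    pointIdeal_coord _ i₀ (mul_ne_zero (hp i₀) h0) (fun j hj => by rw [hz j hj, mul_zero])
  have h₁ : hadamard (pointIdeal p ^ m) (M ^ n) = M ^ n := by
    apply le_antisymm
    · -- ⊆ : apply the substitution ψ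
      set ψ : MvPolynomial (Fin 3 ⊕ (Fin 3 ⊕ Fin 3)) K →ₐ[K] MvPolynomial (Fin 3) K :=
        aeval (Sum.elim X (Sum.elim (fun i => C (p i)) (fun i => C (p i)⁻¹ * X i))) with hψ
      set θ : MvPolynomial (Fin 3) K →ₐ[K] MvPolynomial (Fin 3) K :=
        aeval (fun i => C (p i)⁻¹ * X i) with hθ
      have hθMn : Ideal.map θ (M ^ n) ≤ M ^ n := by
        rw [Ideal.map_pow]
        refine Ideal.pow_right_mono ?_ n
        rw [Ideal.map_le_iff_le_comap, hMdef, Ideal.span_le]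
        rintro g ⟨j, hj, rfl⟩
        simp only [SetLike.mem_coe, Ideal.mem_comap, hθ, aeval_X]
        exact Ideal.mul_mem_left _ _ (Ideal.subset_span ⟨j, hj, rfl⟩)
      intro f hf
      rw [hadamard, Ideal.mem_comap] at hf
      have key : Ideal.map (rename (fun i : Fin 3 =>
            (Sum.inr (Sum.inl i) : Fin 3 ⊕ (Fin 3 ⊕ Fin 3)))) (pointIdeal p ^ m)
          + Ideal.map (rename (fun i : Fin 3 =>
            (Sum.inr (Sum.inr i) : Fin 3 ⊕ (Fin 3 ⊕ Fin 3)))) (M ^ n)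
          + Ideal.span { g | ∃ i : Fin 3,
              g = X (Sum.inl i) - X (Sum.inr (Sum.inl i)) * X (Sum.inr (Sum.inr i)) }
          ≤ Ideal.comap ψ (M ^ n) := by
        refine sup_le (sup_le ?_ ?_) ?_
        · rw [Ideal.map_le_iff_le_comap]
          refine le_trans (Ideal.pow_le_self (by omega)) ?_
          rw [pointIdeal, Ideal.span_le]
          rintro g ⟨i, j, rfl⟩
          simp only [SetLike.mem_coe, Ideal.mem_comap]
          rw [show ψ ((rename fun i : Fin 3 => (Sum.inr (Sum.inl i) : Fin 3 ⊕ (Fin 3 ⊕ Fin 3)))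
                (C (p j) * X i - C (p i) * X j))
              = aeval (fun i => (C (p i) : MvPolynomial (Fin 3) K)) (C (p j) * X i - C (p i) * X j)
            from aeval_rename _ _ _]
          rw [map_sub, map_mul, map_mul, aeval_X, aeval_X, aeval_C, aeval_C]
          rw [show (algebraMap K (MvPolynomial (Fin 3) K)) (p j) * C (p i)
              - (algebraMap K (MvPolynomial (Fin 3) K)) (p i) * C (p j) = 0 from by
            simp only [algebraMap_eq]; ring]
          exact zero_mem _
        · rw [Ideal.map_le_iff_le_comap]
          intro g hg
          simp only [Ideal.mem_comap]
          rw [show ψ ((rename fun i : Fin 3 => (Sum.inr (Sum.inr i) : Fin 3 ⊕ (Fin 3 ⊕ Fin 3))) g)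
              = θ g from aeval_rename _ _ g]
          exact hθMn (Ideal.mem_map_of_mem θ hg)
        · rw [Ideal.span_le]
          rintro g ⟨i, rfl⟩
          simp only [SetLike.mem_coe, Ideal.mem_comap, map_sub, map_mul, hψ, aeval_X,
            Sum.elim_inl, Sum.elim_inr]
          rw [show (X i : MvPolynomial (Fin 3) K) - C (p i) * (C (p i)⁻¹ * X i) = 0 from by
            rw [← mul_assoc, ← C_mul, mul_inv_cancel₀ (hp i), C_1, one_mul, sub_self]]
          exact zero_mem _
      have h2 : ψ (rename Sum.inl f) ∈ M ^ n := key hf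
      rwa [show ψ (rename Sum.inl f) = f from (aeval_rename _ _ f).trans (aeval_X_left_apply f)]
        at h2
    · -- ⊇
      intro g hg
      rw [hadamard, Ideal.mem_comap]
      set φ : MvPolynomial (Fin 3) K →ₐ[K] MvPolynomial (Fin 3 ⊕ (Fin 3 ⊕ Fin 3)) K :=
        aeval (fun i : Fin 3 => X (Sum.inr (Sum.inl i)) * X (Sum.inr (Sum.inr i))) with hφdef
      have hφ : φ g ∈ Ideal.map (rename (fun i : Fin 3 =>
          (Sum.inr (Sum.inr i) : Fin 3 ⊕ (Fin 3 ⊕ Fin 3)))) (M ^ n) := by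
        have hle : Ideal.map φ (M ^ n) ≤ Ideal.map (rename (fun i : Fin 3 =>
            (Sum.inr (Sum.inr i) : Fin 3 ⊕ (Fin 3 ⊕ Fin 3)))) (M ^ n) := by
          rw [Ideal.map_pow, Ideal.map_pow]
          refine Ideal.pow_right_mono ?_ n
          rw [Ideal.map_le_iff_le_comap, hMdef, Ideal.span_le]
          rintro f ⟨j, hj, rfl⟩
          simp only [SetLike.mem_coe, Ideal.mem_comap, hφdef, aeval_X]
          refine Ideal.mul_mem_left _ _ ?_
          have := Ideal.mem_map_of_mem (rename (fun i : Fin 3 =>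
            (Sum.inr (Sum.inr i) : Fin 3 ⊕ (Fin 3 ⊕ Fin 3))))
            (show (X j : MvPolynomial (Fin 3) K) ∈ M from Ideal.subset_span ⟨j, hj, rfl⟩)
          rwa [rename_X] at this
        exact hle (Ideal.mem_map_of_mem φ hg)
      have e : rename (Sum.inl : Fin 3 → Fin 3 ⊕ (Fin 3 ⊕ Fin 3)) g
          = (rename Sum.inl g - φ g) + φ g := by ring
      rw [e]
      refine add_mem ?_ ?_
      · rw [Ideal.add_eq_sup]
        exact Submodule.mem_sup_right (sub_mem_relations g)
      · rw [Ideal.add_eq_sup, Ideal.add_eq_sup]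
        exact Submodule.mem_sup_left (Submodule.mem_sup_right hφ)
  refine ⟨by rw [hMq]; exact h₁, by rw [hMq, hMpq], ?_⟩
  intro hm2 heq
  rw [hMq, h₁, hMpq] at heq
  -- heq : M ^ n = M ^ (m + n - 1)
  set j₁ : Fin 3 := if i₀ = 0 then 1 else 0 with hj₁def
  have hj₁ : j₁ ≠ i₀ := by
    rw [hj₁def]; split_ifs with h
    · rw [h]; decide
    · exact fun e => h e.symm
  have hXmem : (X j₁ : MvPolynomial (Fin 3) K) ∈ M := Ideal.subset_span ⟨j₁, hj₁, rfl⟩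
  have h1 : (X j₁ : MvPolynomial (Fin 3) K) ^ n ∈ M ^ (m + n - 1) :=
    heq ▸ Ideal.pow_mem_pow hXmem n
  have h2 : M ^ (m + n - 1) ≤ M ^ (n + 1) := Ideal.pow_le_pow_right (by omega)
  set χ : MvPolynomial (Fin 3) K →ₐ[K] Polynomial K :=
    aeval (fun i => if i = i₀ then 0 else Polynomial.X) with hχdef
  have hχM : Ideal.map χ M ≤ Ideal.span {(Polynomial.X : Polynomial K)} := by
    rw [Ideal.map_le_iff_le_comap, hMdef, Ideal.span_le]
    rintro f ⟨j, hj, rfl⟩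
    simp only [SetLike.mem_coe, Ideal.mem_comap, hχdef, aeval_X, if_neg hj]
    exact Ideal.subset_span rfl
  have h3 : χ (X j₁ ^ n) ∈ Ideal.span {(Polynomial.X : Polynomial K) ^ (n + 1)} := by
    have hmem := Ideal.mem_map_of_mem χ (h2 h1)
    rw [Ideal.map_pow] at hmem
    have h4 := Ideal.pow_right_mono hχM (n + 1)
    rw [Ideal.span_singleton_pow] at h4
    exact h4 hmem
  rw [map_pow, show χ (X j₁) = Polynomial.X from by rw [hχdef, aeval_X, if_neg hj₁]] at h3
  rw [Ideal.mem_span_singleton] at h3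
  have := (Polynomial.X_pow_dvd_iff.mp h3) n (by omega)
  rw [Polynomial.coeff_X_pow, if_pos rfl] at this
  exact one_ne_zero this
end
end
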